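/- arXiv:2408.03879 — 4 statements merged into one kernel-verified Lean document; each statement's English description precedes it below -/
import Mathlib

section
/- In the dihedral group $D_{2n}$ with $n=2^t m$ ($t\ge 1$, $m\ge 3$ odd), for integers $0\le i,j< n$ there exists a positive integer $k$ with $[xy^i,{}_k\,xy^j]=1$ if and only if $i\equiv j \pmod m$. -/
/-- The commutator `[a,b] = a⁻¹ b⁻¹ a b` (paper convention). -/
def cm {G : Type*} [Group G] (a b : G) : G := a⁻¹ * b⁻¹ * a * b

/-- Iterated (Engel) commutator: `engel a b 0 = a`, `engel a b (n+1) = [engel a b n, b]`,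
so for `n ≥ 1`, `engel a b n = [a, ₙ b]`. -/
def engel {G : Type*} [Group G] (a b : G) : ℕ → G
  | 0 => a
  | n + 1 => cm (engel a b n) b

lemma inv_sr {n : ℕ} (a : ZMod n) : (DihedralGroup.sr a)⁻¹ = DihedralGroup.sr a := rfl

lemma inv_r {n : ℕ} (a : ZMod n) : (DihedralGroup.r a)⁻¹ = DihedralGroup.r (-a) := rfl

lemma cm_r_sr {n : ℕ} (w v : ZMod n) :
    cm (DihedralGroup.r w) (DihedralGroup.sr v) = DihedralGroup.r (-2 * w) := by
  simp only [cm, inv_r, inv_sr, DihedralGroup.r_mul_sr, DihedralGroup.sr_mul_r,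
    DihedralGroup.sr_mul_sr]
  ring_nf

lemma engel_sr {n : ℕ} (a b : ZMod n) (k : ℕ) :
    engel (DihedralGroup.sr a) (DihedralGroup.sr b) (k + 1)
      = DihedralGroup.r ((-2) ^ k * (2 * (b - a))) := by
  induction k with
  | zero =>
    simp only [engel, cm, inv_sr, DihedralGroup.sr_mul_sr, DihedralGroup.r_mul_sr,
      DihedralGroup.sr_mul_r]
    ring_nf
  | succ k ih =>
    show cm (engel _ _ (k + 1)) _ = _
    rw [ih, cm_r_sr]
    ring_nf

theorem stmt3 (t m : ℕ) (ht : 1 ≤ t) (hm : 3 ≤ m) (hodd : Odd m)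
    (i j : ℕ) (hi : i < 2 ^ t * m) (hj : j < 2 ^ t * m) :
    (∃ k, 1 ≤ k ∧
        engel (DihedralGroup.sr (i : ZMod (2 ^ t * m)))
          (DihedralGroup.sr (j : ZMod (2 ^ t * m))) k = 1) ↔ i % m = j % m := by
  set n : ℕ := 2 ^ t * m with hn
  constructor
  · rintro ⟨k, hk, hek⟩
    obtain ⟨k, rfl⟩ := Nat.exists_eq_add_of_le hk
    rw [add_comm, engel_sr, DihedralGroup.one_def] at hek
    have h := DihedralGroup.r.inj hek
    have hdvd : (n : ℤ) ∣ (-2) ^ k * (2 * ((j : ℤ) - i)) := by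
      rw [← ZMod.intCast_zmod_eq_zero_iff_dvd]
      simp only [Int.cast_mul, Int.cast_pow, Int.cast_neg, Int.cast_ofNat, Int.cast_sub,
        Int.cast_natCast]
      exact h
    have hm' : (m : ℤ) ∣ (-2) ^ k * (2 * ((j : ℤ) - i)) :=
      dvd_trans ⟨(2 ^ t : ℤ), by push_cast [hn]; ring⟩ hdvd
    have h2 : IsCoprime (m : ℤ) 2 := by
      rw [Int.isCoprime_iff_gcd_eq_one]
      exact_mod_cast Nat.coprime_two_right.mpr hodd
    have hcop : IsCoprime (m : ℤ) ((-2) ^ k * 2) := (h2.neg_right.pow_right).mul_right h2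
    have hmd : (m : ℤ) ∣ ((j : ℤ) - i) := hcop.dvd_of_dvd_mul_left (by rwa [mul_assoc])
    have : (i : ℤ) ≡ j [ZMOD m] := Int.modEq_iff_dvd.mpr hmd
    exact (Int.natCast_modEq_iff.mp this)
  · intro hmod
    refine ⟨t, ht, ?_⟩
    obtain ⟨t', rfl⟩ := Nat.exists_eq_add_of_le ht
    rw [add_comm, engel_sr, DihedralGroup.one_def]
    congr 1
    have hmd : (m : ℤ) ∣ ((j : ℤ) - i) := by
      have : (i : ℤ) ≡ j [ZMOD m] := Int.natCast_modEq_iff.mpr hmod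
      exact Int.ModEq.dvd this
    obtain ⟨d, hd⟩ := hmd
    have : ((-2 : ℤ) ^ t' * (2 * ((j : ℤ) - i))) = (n : ℤ) * ((-1) ^ t' * d) := by
      push_cast [hn, hd]
      rw [show ((-2 : ℤ) ^ t') = (-1) ^ t' * 2 ^ t' from by rw [← neg_one_mul, mul_pow]]
      ring
    calc ((-2 : ZMod n) ^ t' * (2 * ((j : ℕ) - (i : ℕ) : ZMod n)))
        = (((-2 : ℤ) ^ t' * (2 * ((j : ℤ) - i)) : ℤ) : ZMod n) := by push_cast; ring
      _ = 0 := by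
          rw [this]
          push_cast
          simp
end

section
/- Let $G$ be the Frobenius group $F_{p,q}=\langle a,b \mid a^p=b^q=1,\ a^{-1}ba=b^r\rangle$ of order $pq$, where $p,q$ are primes with $q\equiv 1\pmod p$ and $r$ has multiplicative order $p$ modulo $q$. If $x\in\langle ab^i\rangle$ and $y\in\langle ab^j\rangle$ are nonidentity elements with $0\le i\ne j\le q-1$, then $[x,{}_n y]\ne 1$ for every positive integer $n$. -/
/-- Auxiliary geometric-sum sequence: `eaux r s = 1 + r + ⋯ + r^(s-1)` (as an integer). -/
def eaux (r : ℕ) : ℕ → ℤ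
  | 0 => 0
  | n + 1 => eaux r n * r + 1

theorem stmt4 {G : Type*} [Group G] (p q r : ℕ) (hp : p.Prime) (hq : q.Prime)
    (hq1 : q % p = 1) (a b : G) (hG : Nat.card G = p * q)
    (ha : orderOf a = p) (hb : orderOf b = q)
    (hrel : a⁻¹ * b * a = b ^ r) (hr : orderOf (r : ZMod q) = p)
    (i j : ℕ) (hi : i ≤ q - 1) (hj : j ≤ q - 1) (hij : i ≠ j)
    (x y : G) (hx : x ∈ Subgroup.zpowers (a * b ^ i)) (hy : y ∈ Subgroup.zpowers (a * b ^ j))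
    (hx1 : x ≠ 1) (hy1 : y ≠ 1) :
    ∀ n, 1 ≤ n → engel x y n ≠ 1 := by
  haveI : Fact q.Prime := ⟨hq⟩
  set R : ZMod q := (r : ZMod q) with hR
  have hp1 : 1 < p := hp.one_lt
  have hq2 : 2 ≤ q := hq.two_le
  have hRp : R ^ p = 1 := by rw [← hr]; exact pow_orderOf_eq_one R
  have hR1 : R - 1 ≠ 0 := by
    intro h
    have : R = 1 := by linear_combination h
    rw [this, orderOf_one] at hr; omega
  -- b ^ m = 1 ↔ (m : ZMod q) = 0
  have hbm : ∀ m : ℤ, b ^ m = 1 ↔ ((m : ZMod q) = 0) := by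
    intro m
    rw [← orderOf_dvd_iff_zpow_eq_one, hb, ZMod.intCast_zmod_eq_zero_iff_dvd]
  -- conjugation lemmas
  have hconj1 : ∀ m : ℤ, a⁻¹ * b ^ m * a = b ^ (m * r) := by
    intro m
    have h1 : a⁻¹ * b ^ m * a = (a⁻¹ * b * a) ^ m := by
      simpa using (map_zpow (MulAut.conj a⁻¹) b m)
    rw [h1, hrel, ← zpow_natCast b r, ← zpow_mul, mul_comm]
  have hmove : ∀ m : ℤ, b ^ m * a = a * b ^ (m * r) := by
    intro m
    rw [← hconj1 m]; group
  have hmovet : ∀ (t : ℕ) (m : ℤ), b ^ m * a ^ t = a ^ t * b ^ (m * (r : ℤ) ^ t) := by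
    intro t
    induction t with
    | zero => intro m; simp
    | succ t ih =>
      intro m
      have h2 : b ^ m * a ^ (t + 1) = (b ^ m * a) * a ^ t := by rw [pow_succ', mul_assoc]
      rw [h2, hmove m, mul_assoc, ih (m * r), ← mul_assoc, ← pow_succ']
      congr 1
      push_cast
      ring
  have hconjt : ∀ (t : ℕ) (m : ℤ), (a ^ t)⁻¹ * b ^ m * a ^ t = b ^ (m * (r : ℤ) ^ t) := by
    intro t m
    rw [mul_assoc, hmovet t m, ← mul_assoc, inv_mul_cancel, one_mul]
  -- geometric sum identity in ZMod q
  have hgeom : ∀ s : ℕ, (R - 1) * ((eaux r s : ℤ) : ZMod q) = R ^ s - 1 := by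
    intro s
    induction s with
    | zero => simp [eaux]
    | succ s ih =>
      show (R - 1) * ((eaux r s * r + 1 : ℤ) : ZMod q) = R ^ (s + 1) - 1
      push_cast
      rw [← hR]
      ring_nf
      ring_nf at ih
      linear_combination R * ih
  -- normal form
  have hNF : ∀ (c : ℕ) (s : ℕ), (a * b ^ (c : ℤ)) ^ s = a ^ s * b ^ (c * eaux r s) := by
    intro c s
    induction s with
    | zero => simp [eaux]
    | succ s ih =>
      rw [pow_succ, ih, mul_assoc, ← mul_assoc (b ^ ((c : ℤ) * eaux r s)), hmove, eaux]
      rw [← mul_assoc, ← mul_assoc, ← pow_succ]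
      rw [mul_assoc (a ^ (s + 1)), ← zpow_add]
      ring_nf
  -- order of a * b ^ c divides p
  have hordc : ∀ c : ℕ, (a * b ^ (c : ℤ)) ^ p = 1 := by
    intro c
    rw [hNF c p]
    have hep : ((eaux r p : ℤ) : ZMod q) = 0 := by
      have := hgeom p
      rw [hRp, sub_self] at this
      exact (mul_eq_zero.mp this).resolve_left hR1
    have hbp : b ^ ((c : ℤ) * eaux r p) = 1 := by
      rw [hbm]; push_cast [hep]; ring
    rw [hbp, mul_one, ← ha]
    exact pow_orderOf_eq_one a
  -- extraction from zpowers
  have hextract : ∀ (c : ℕ) (g : G), g ∈ Subgroup.zpowers (a * b ^ c) → g ≠ 1 →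
      ∃ s : ℕ, 1 ≤ s ∧ s < p ∧ g = a ^ s * b ^ ((c : ℤ) * eaux r s) := by
    intro c g hg hg1
    obtain ⟨m, hm⟩ := hg
    have hbc : (b ^ c : G) = b ^ (c : ℤ) := (zpow_natCast b c).symm
    rw [hbc] at hm
    have hpz : (0:ℤ) < (p:ℤ) := by exact_mod_cast hp.pos
    have hs0 : 0 ≤ m % (p:ℤ) := Int.emod_nonneg m (by omega)
    have hslt : m % (p:ℤ) < (p:ℤ) := Int.emod_lt_of_pos m hpz
    set s : ℕ := (m % (p:ℤ)).toNat with hsdef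
    have hsmod : ((s : ℤ)) = m % (p:ℤ) := Int.toNat_of_nonneg hs0
    have hm2 : (a * b ^ (c:ℤ)) ^ m = g := hm
    have hdecomp : m = (p:ℤ) * (m / (p:ℤ)) + m % (p:ℤ) := (Int.mul_ediv_add_emod m p).symm
    have hgs : g = (a * b ^ (c:ℤ)) ^ s := by
      rw [← hm2, ← zpow_natCast, hsmod]
      conv_lhs => rw [hdecomp]
      rw [zpow_add, zpow_mul, zpow_natCast, hordc c, one_zpow, one_mul]
    have hsp : s < p := by omega
    rcases Nat.eq_zero_or_pos s with h0 | h1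
    · exfalso; apply hg1; rw [hgs, h0, pow_zero]
    · exact ⟨s, h1, hsp, by rw [hgs, hNF c s]⟩
  obtain ⟨s, hs1, hsp, hxe⟩ := hextract i x hx hx1
  obtain ⟨k, hk1, hkp, hye⟩ := hextract j y hy hy1
  set u : ℤ := (i : ℤ) * eaux r s with hu
  set v : ℤ := (j : ℤ) * eaux r k with hv
  -- nonvanishing facts
  have hRs : ∀ t : ℕ, 1 ≤ t → t < p → R ^ t - 1 ≠ 0 := by
    intro t h1 h2 h
    have ht : R ^ t = 1 := by linear_combination h
    have hd := orderOf_dvd_of_pow_eq_one ht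
    rw [hr] at hd
    have := Nat.le_of_dvd (by omega) hd
    omega
  have hEt : ∀ t : ℕ, 1 ≤ t → t < p → ((eaux r t : ℤ) : ZMod q) ≠ 0 := by
    intro t h1 h2 h
    apply hRs t h1 h2
    rw [← hgeom t, h, mul_zero]
  -- product in normal form
  have hmul : ∀ (s' k' : ℕ) (u' v' : ℤ),
      (a ^ s' * b ^ u') * (a ^ k' * b ^ v') = a ^ (s' + k') * b ^ (u' * (r:ℤ) ^ k' + v') := by
    intro s' k' u' v'
    rw [mul_assoc, ← mul_assoc (b ^ u'), hmovet k' u', ← mul_assoc, ← mul_assoc, ← pow_add,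
      mul_assoc, ← zpow_add]
  -- commutator of normal forms
  have hcm : ∀ (s' k' : ℕ) (u' v' : ℤ),
      cm (a ^ s' * b ^ u') (a ^ k' * b ^ v')
        = b ^ (u' * (r:ℤ) ^ k' + v' - (v' * (r:ℤ) ^ s' + u')) := by
    intro s' k' u' v'
    have h1 := hmul s' k' u' v'
    have h2 : (a ^ k' * b ^ v') * (a ^ s' * b ^ u')
        = a ^ (s' + k') * b ^ (v' * (r:ℤ) ^ s' + u') := by
      rw [hmul, add_comm k' s']
    have h3 : cm (a ^ s' * b ^ u') (a ^ k' * b ^ v')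
        = ((a ^ k' * b ^ v') * (a ^ s' * b ^ u'))⁻¹ * ((a ^ s' * b ^ u') * (a ^ k' * b ^ v')) := by
      unfold cm; group
    rw [h3, h1, h2, mul_inv_rev, mul_assoc, ← mul_assoc _ (a ^ (s' + k')), inv_mul_cancel,
      one_mul, ← zpow_neg, ← zpow_add]
    congr 1
    ring
  -- conjugation of b-powers by y
  have hcmy : ∀ m : ℤ, cm (b ^ m) (a ^ k * b ^ v) = b ^ (m * ((r:ℤ) ^ k - 1)) := by
    intro m
    have h3 : (a ^ k * b ^ v)⁻¹ * b ^ m * (a ^ k * b ^ v)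
        = b ^ (-v) * ((a ^ k)⁻¹ * b ^ m * a ^ k) * b ^ v := by
      rw [mul_inv_rev, ← zpow_neg]; group
    have h4 : cm (b ^ m) (a ^ k * b ^ v)
        = (b ^ m)⁻¹ * ((a ^ k * b ^ v)⁻¹ * b ^ m * (a ^ k * b ^ v)) := by
      unfold cm; group
    rw [h4, h3, hconjt k m, ← zpow_neg, ← zpow_add, ← zpow_add, ← zpow_add]
    congr 1
    ring
  -- the main induction
  have key : ∀ n, 1 ≤ n → ∃ m : ℤ, engel x y n = b ^ m ∧ ((m : ZMod q) ≠ 0) := by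
    intro n hn
    induction n, hn using Nat.le_induction with
    | base =>
      refine ⟨u * (r:ℤ) ^ k + v - (v * (r:ℤ) ^ s + u), ?_, ?_⟩
      · show cm (engel x y 0) y = _
        show cm x y = _
        rw [hxe, hye]
        exact hcm s k u v
      · have hiq : i < q := by omega
        have hjq : j < q := by omega
        have hIJ : (i : ZMod q) - (j : ZMod q) ≠ 0 := by
          rw [sub_ne_zero]
          intro h
          apply hij
          have := congrArg ZMod.val h
          rwa [ZMod.val_natCast_of_lt hiq, ZMod.val_natCast_of_lt hjq] at this
        have hcast : ((u * (r:ℤ) ^ k + v - (v * (r:ℤ) ^ s + u) : ℤ) : ZMod q)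
            = ((eaux r s : ℤ) : ZMod q) * ((eaux r k : ℤ) : ZMod q) * (R - 1)
              * ((i : ZMod q) - (j : ZMod q)) := by
          rw [hu, hv]
          push_cast
          rw [← hR]
          linear_combination ((j : ZMod q) * ((eaux r k : ℤ) : ZMod q)) * hgeom s
            - ((i : ZMod q) * ((eaux r s : ℤ) : ZMod q)) * hgeom k
        rw [hcast]
        exact mul_ne_zero (mul_ne_zero (mul_ne_zero (hEt s hs1 hsp) (hEt k hk1 hkp)) hR1) hIJ
    | succ n hn ih =>
      obtain ⟨m, hm, hm0⟩ := ih
      refine ⟨m * ((r:ℤ) ^ k - 1), ?_, ?_⟩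
      · show cm (engel x y n) y = _
        rw [hm, hye]
        exact hcmy m
      · have : ((m * ((r:ℤ) ^ k - 1) : ℤ) : ZMod q) = (m : ZMod q) * (R ^ k - 1) := by
          push_cast [← hR]; ring
        rw [this]
        exact mul_ne_zero hm0 (hRs k hk1 hkp)
  intro n hn h1
  obtain ⟨m, hm, hm0⟩ := key n hn
  rw [hm] at h1
  exact hm0 ((hbm m).mp h1)
end

section
/- Let $G$ be a finite group and let $x,y\in G$ be such that $[x,{}_n y]\ne 1$ and $[y,{}_n x]\ne 1$ for all positive integers $n$. Then for all $z_1,z_2$ in the hypercenter $Z^*(G)$, the elements $xz_1$ and $yz_2$ also satisfy $[xz_1,{}_n\,yz_2]\ne 1$ and $[yz_2,{}_n\,xz_1]\ne 1$ for all positive integers $n$. -/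
/-- The hypercenter: the union (supremum) of the upper central series. -/
def hypercenter (G : Type*) [Group G] : Subgroup G := ⨆ n : ℕ, upperCentralSeries G n

lemma engel_add {G : Type*} [Group G] (a b : G) (n m : ℕ) :
    engel a b (n + m) = engel (engel a b n) b m := by
  induction m with
  | zero => rfl
  | succ m ih => rw [← Nat.add_assoc]; show cm (engel a b (n+m)) b = _; rw [ih]; rfl

lemma map_engel {G H : Type*} [Group G] [Group H] (f : G →* H) (a b : G) (n : ℕ) :
    f (engel a b n) = engel (f a) (f b) n := by
  induction n with
  | zero => rfl
  | succ n ih => show f (cm _ _) = cm _ _; simp [cm, ih]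

lemma mem_hypercenter_iff {G : Type*} [Group G] {z : G} :
    z ∈ hypercenter G ↔ ∃ n, z ∈ upperCentralSeries G n := by
  unfold hypercenter
  exact Subgroup.mem_iSup_of_directed (upperCentralSeries_mono G).directed_le

instance hypercenter_normal (G : Type*) [Group G] : (hypercenter G).Normal := by
  constructor
  intro a ha g
  obtain ⟨n, hn⟩ := mem_hypercenter_iff.mp ha
  exact mem_hypercenter_iff.mpr ⟨n, (inferInstance : (Subgroup.upperCentralSeries G n).Normal).conj_mem a hn g⟩

lemma ucs_right_engel {G : Type*} [Group G] :
    ∀ n : ℕ, ∀ z g : G, z ∈ upperCentralSeries G n → engel z g n = 1 := by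
  intro n
  induction n with
  | zero =>
    intro z g hz
    exact (Subgroup.mem_bot.mp (by simpa [upperCentralSeries, engel] using hz))
  | succ n ih =>
    intro z g hz
    have hb : z * g⁻¹ * z⁻¹ * g⁻¹⁻¹ ∈ upperCentralSeries G n :=
      mem_upperCentralSeries_succ_iff.mp hz g⁻¹
    have hbi : (z * g⁻¹ * z⁻¹ * g⁻¹⁻¹)⁻¹ ∈ upperCentralSeries G n :=
      (upperCentralSeries G n).inv_mem hb
    have hc : z⁻¹ * (z * g⁻¹ * z⁻¹ * g⁻¹⁻¹)⁻¹ * z⁻¹⁻¹ ∈ upperCentralSeries G n :=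
      (inferInstance : (Subgroup.upperCentralSeries G n).Normal).conj_mem _ hbi z⁻¹
    have hcm : cm z g ∈ upperCentralSeries G n := by
      have : cm z g = z⁻¹ * (z * g⁻¹ * z⁻¹ * g⁻¹⁻¹)⁻¹ * z⁻¹⁻¹ := by
        unfold cm; group
      rw [this]; exact hc
    have : engel z g (n+1) = engel (cm z g) g n := by
      have := engel_add z g 1 n
      simpa [Nat.add_comm, engel, cm] using this
    rw [this]
    exact ih (cm z g) g hcm

lemma hypercenter_right_engel {G : Type*} [Group G] {z : G} (hz : z ∈ hypercenter G)
    (g : G) : ∃ m : ℕ, engel z g m = 1 := by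
  obtain ⟨n, hn⟩ := mem_hypercenter_iff.mp hz
  exact ⟨n, ucs_right_engel n z g hn⟩

lemma key {G : Type*} [Group G] (x y : G)
    (hx : ∀ n, 1 ≤ n → engel x y n ≠ 1)
    (z1 z2 : G) (hz1 : z1 ∈ hypercenter G) (hz2 : z2 ∈ hypercenter G) :
    ∀ n, 1 ≤ n → engel (x * z1) (y * z2) n ≠ 1 := by
  intro n hn hcontra
  let π := QuotientGroup.mk' (hypercenter G)
  have hπ1 : π z1 = 1 := (QuotientGroup.eq_one_iff z1).mpr hz1
  have hπ2 : π z2 = 1 := (QuotientGroup.eq_one_iff z2).mpr hz2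
  have : π (engel x y n) = 1 := by
    rw [map_engel]
    have : engel (π x) (π y) n = π (engel (x*z1) (y*z2) n) := by
      rw [map_engel, map_mul, map_mul, hπ1, hπ2, mul_one, mul_one]
    rw [this, hcontra, map_one]
  have hmem : engel x y n ∈ hypercenter G := (QuotientGroup.eq_one_iff _).mp this
  obtain ⟨m, hm⟩ := hypercenter_right_engel hmem y
  have : engel x y (n + m) = 1 := by rw [engel_add, hm]
  exact hx (n + m) (le_trans hn (Nat.le_add_right n m)) this

theorem stmt7 {G : Type*} [Group G] [Finite G] (x y : G)
    (h : ∀ n, 1 ≤ n → engel x y n ≠ 1 ∧ engel y x n ≠ 1)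
    (z1 z2 : G) (hz1 : z1 ∈ hypercenter G) (hz2 : z2 ∈ hypercenter G) :
    ∀ n, 1 ≤ n → engel (x * z1) (y * z2) n ≠ 1 ∧ engel (y * z2) (x * z1) n ≠ 1 := by
  intro n hn
  exact ⟨key x y (fun m hm => (h m hm).1) z1 z2 hz1 hz2 n hn,
         key y x (fun m hm => (h m hm).2) z2 z1 hz2 hz1 n hn⟩
end

section
/- Let $P$ be a finite $p$-group acted on by an element $x$ of order a power of a prime $q\ne p$ (i.e., $x$ normalizes $P$ inside some finite group). If $x$ acts nontrivially on $P$, then there exists $y\in P$ such that $[y,{}_n x]\ne 1$ for all positive integers $n$. -/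
open Finset in
lemma ringlemma {R : Type*} [Ring R] (u : R) (M N : ℕ)
    (h1 : (1 + u) ^ M = 1) (h2 : u ^ N = 0) : (M ^ N : ℕ) • u = 0 := by
  have hcu : ∀ j : ℕ, Commute u ((1+u)^j) := fun j =>
    (Commute.one_right u |>.add_right (Commute.refl u)).pow_right j
  set T : R := ∑ j ∈ range M, ∑ i ∈ range j, (1+u)^i with hT
  set V : R := -T with hV
  have hcT : Commute u T := Commute.sum_right _ _ _ (fun j _ =>
    Commute.sum_right _ _ _ fun i _ => hcu i)
  have hcV : Commute u V := hcT.neg_right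
  have hS : (∑ j ∈ range M, (1+u)^j) * u = 0 := by
    have := geom_sum_mul (1+u) M
    simpa [h1] using this
  have hSeq : (∑ j ∈ range M, (1+u)^j) = (M : R) + T * u := by
    have hj : ∀ j : ℕ, (1+u)^j = 1 + (∑ i ∈ range j, (1+u)^i) * u := by
      intro j
      have := geom_sum_mul (1+u) j
      simp only [add_sub_cancel_left] at this
      rw [this, add_sub_cancel]
    calc (∑ j ∈ range M, (1+u)^j) = ∑ j ∈ range M, (1 + (∑ i ∈ range j, (1+u)^i) * u) :=
          Finset.sum_congr rfl fun j _ => hj j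
      _ = (M : R) + T * u := by
          rw [Finset.sum_add_distrib, Finset.sum_const, card_range, hT, Finset.sum_mul,
            nsmul_eq_mul, mul_one]
  have key : (M : R) * u = V * u^2 := by
    have h0 : ((M : R) + T * u) * u = 0 := by rw [← hSeq]; exact hS
    rw [add_mul] at h0
    rw [hV, neg_mul, sq, ← mul_assoc]
    exact eq_neg_of_add_eq_zero_left h0
  have main : ∀ t : ℕ, (M : R)^t * u = V^t * u^(t+1) := by
    intro t
    induction t with
    | zero => simp
    | succ t ih =>
      have c1 : Commute ((M:R)) (V^t) := (Nat.cast_commute M _)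
      calc (M:R)^(t+1) * u = (M:R) * ((M:R)^t * u) := by
            rw [pow_succ', mul_assoc]
        _ = (M:R) * (V^t * u^(t+1)) := by rw [ih]
        _ = V^t * ((M:R) * u^(t+1)) := by rw [← mul_assoc, c1.eq, mul_assoc]
        _ = V^t * (((M:R) * u) * u^t) := by rw [mul_assoc, ← pow_succ']
        _ = V^t * ((V * u^2) * u^t) := by rw [key]
        _ = V^(t+1) * u^(t+2) := by
            rw [mul_assoc V, ← pow_add, ← mul_assoc, ← pow_succ, add_comm 2 t]
  have hfin := main N
  rw [pow_succ, h2, zero_mul, mul_zero] at hfin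
  rw [nsmul_eq_mul, Nat.cast_pow, hfin]

lemma endPow {A : Type*} [AddCommMonoid A] (f : AddMonoid.End A) (n : ℕ) (a : A) :
    (f ^ n) a = f^[n] a := by
  induction n with
  | zero => rfl
  | succ n ih => rw [pow_succ', Function.iterate_succ', Function.comp_apply, ← ih]; rfl

lemma keyAbelian {H : Type*} [CommGroup H] (φ : H →* H) (M N : ℕ)
    (hM : ∀ y, φ^[M] y = y) (hN : ∀ y : H, (fun z => z⁻¹ * φ z)^[N] y = 1) :
    ∀ y : H, (y⁻¹ * φ y) ^ (M ^ N) = 1 := by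
  intro y
  set e : AddMonoid.End (Additive H) := MonoidHom.toAdditive φ with he
  have heApp : ∀ a : Additive H, e a = Additive.ofMul (φ a.toMul) := fun a => rfl
  set u : AddMonoid.End (Additive H) := e - 1 with hu
  have huApp : ∀ a : Additive H, u a = Additive.ofMul (a.toMul⁻¹ * φ a.toMul) := by
    intro a
    show e a - a = _
    rw [heApp]
    apply Additive.toMul.injective
    simp [mul_comm, div_eq_mul_inv]
  have h1 : (1 + u) ^ M = 1 := by
    have h1e : (1 : AddMonoid.End (Additive H)) + u = e := by rw [hu]; abel
    rw [h1e]
    apply AddMonoidHom.ext; intro a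
    erw [endPow]
    have : ∀ (n : ℕ) (a : Additive H), e^[n] a = Additive.ofMul (φ^[n] a.toMul) := by
      intro n
      induction n with
      | zero => intro a; rfl
      | succ n ih =>
        intro a
        rw [Function.iterate_succ', Function.iterate_succ', Function.comp_apply,
          Function.comp_apply, ih, heApp]
        rfl
    rw [this, hM]
    rfl
  have h2 : u ^ N = 0 := by
    apply AddMonoidHom.ext; intro a
    erw [endPow]
    have : ∀ (n : ℕ) (a : Additive H),
        u^[n] a = Additive.ofMul ((fun z => z⁻¹ * φ z)^[n] a.toMul) := by
      intro n
      induction n with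
      | zero => intro a; rfl
      | succ n ih =>
        intro a
        rw [Function.iterate_succ', Function.iterate_succ', Function.comp_apply,
          Function.comp_apply, ih, huApp]
        rfl
    rw [this, hN]
    rfl
  have h3 := ringlemma u M N h1 h2
  have h4 : (M ^ N) • (u (Additive.ofMul y)) = 0 := by
    erw [← AddMonoidHom.nsmul_apply, h3]; rfl
  rw [huApp] at h4
  apply Additive.ofMul.injective
  rw [ofMul_pow]
  simpa using h4

lemma coprime_kill {H : Type*} [Group H] {p q : ℕ} (hp : p.Prime) (hq : q.Prime)
    (hpq : p ≠ q) (hP : IsPGroup p H) {y : H} {m : ℕ} (h : y ^ (q ^ m) = 1) : y = 1 := by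
  obtain ⟨s, hs⟩ := hP y
  have h1 : orderOf y ∣ q ^ m := orderOf_dvd_of_pow_eq_one h
  have h2 : orderOf y ∣ p ^ s := orderOf_dvd_of_pow_eq_one hs
  have hcop : Nat.Coprime (p ^ s) (q ^ m) :=
    ((Nat.coprime_primes hp hq).mpr hpq).pow _ _
  have hd : orderOf y ∣ Nat.gcd (p ^ s) (q ^ m) := Nat.dvd_gcd h2 h1
  rw [Nat.Coprime] at hcop
  rw [hcop] at hd
  exact orderOf_eq_one_iff.mp (Nat.eq_one_of_dvd_one hd)

universe u

lemma commutator_ne_top {H : Type u} [Group H] [Finite H] [Nontrivial H]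
    (hnil : Group.IsNilpotent H) : commutator H ≠ ⊤ := by
  intro htop
  obtain ⟨n, hn⟩ := nilpotent_iff_lowerCentralSeries.mp hnil
  have hall : ∀ m, Subgroup.lowerCentralSeries (⊤ : Subgroup H) m = ⊤ := by
    intro m
    induction m with
    | zero => exact Subgroup.lowerCentralSeries_zero _
    | succ m ih =>
      have hstep : Subgroup.lowerCentralSeries (⊤ : Subgroup H) (m+1) = ⁅Subgroup.lowerCentralSeries (⊤ : Subgroup H) m, ⊤⁆ := rfl
      rw [hstep, ih, ← commutator_def, htop]
  rw [hall n] at hn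
  exact top_ne_bot hn

lemma key_s19 : ∀ (n : ℕ) {H : Type u} [Group H] [Finite H], Nat.card H = n →
    ∀ (p q k : ℕ), p.Prime → q.Prime → p ≠ q → IsPGroup p H →
    ∀ (φ : H →* H), (∀ y, φ^[q ^ k] y = y) →
    ∀ (N : ℕ), (∀ y : H, (fun z => z⁻¹ * φ z)^[N] y = 1) →
    ∀ y : H, φ y = y := by
  intro n
  induction n using Nat.strong_induction_on with
  | _ n IH =>
    intro H _ _ hcard p q k hp hq hpq hP φ hM N hN y
    by_cases hcomm : ∀ a b : H, a * b = b * a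
    · -- abelian case
      letI : CommGroup H := { ‹Group H› with mul_comm := hcomm }
      have h := keyAbelian φ (q ^ k) N hM hN y
      rw [← pow_mul] at h
      have : y⁻¹ * φ y = 1 := coprime_kill hp hq hpq hP h
      exact (inv_mul_eq_one.mp this).symm
    · -- non-abelian case
      haveI : Nontrivial H := by
        by_contra hnt
        rw [not_nontrivial_iff_subsingleton] at hnt
        exact hcomm fun a b => Subsingleton.elim _ _
      haveI := Fact.mk hp
      have hnil : Group.IsNilpotent H := hP.isNilpotent
      set D : Subgroup H := commutator H with hD
      have hDtop : D ≠ ⊤ := commutator_ne_top hnil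
      have hDcard : Nat.card D < n := by
        rw [← hcard]
        refine lt_of_le_of_ne D.card_le_card_group fun hEq => hDtop ?_
        exact Subgroup.eq_top_of_card_eq D hEq
      -- φ maps D into D
      have hmapD : ∀ d ∈ D, φ d ∈ D := by
        intro d hd
        have : Subgroup.map φ D ≤ D := by
          rw [hD, commutator_def, Subgroup.map_commutator]
          exact Subgroup.commutator_mono le_top le_top
        exact this ⟨d, hd, rfl⟩
      set φD : D →* D := φ.domRestrict D |>.codRestrict D (fun d => hmapD d d.2) with hφD
      have hφDval : ∀ d : D, (φD d : H) = φ (d : H) := fun d => rfl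
      have hφDiter : ∀ (m : ℕ) (d : D), ((φD^[m] d : D) : H) = φ^[m] (d : H) := by
        intro m
        induction m with
        | zero => intro d; rfl
        | succ m ih =>
          intro d
          rw [Function.iterate_succ', Function.iterate_succ', Function.comp_apply,
            Function.comp_apply, ← ih]
          rfl
      have hψDiter : ∀ (m : ℕ) (d : D),
          (((fun z : D => z⁻¹ * φD z)^[m] d : D) : H) = (fun z : H => z⁻¹ * φ z)^[m] (d : H) := by
        intro m
        induction m with
        | zero => intro d; rfl
        | succ m ih =>
          intro d
          rw [Function.iterate_succ', Function.iterate_succ', Function.comp_apply,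
            Function.comp_apply, ← ih]
          rfl
      -- induction hypothesis applied to D
      have hfixD : ∀ d : D, φD d = d := by
        refine IH (Nat.card D) hDcard rfl p q k hp hq hpq (hP.to_subgroup D) φD ?_ N ?_
        · intro d
          apply Subtype.ext
          rw [hφDiter, hM]
        · intro d
          apply Subtype.ext
          rw [hψDiter, hN]
          rfl
      -- quotient: abelianization
      set φab : Abelianization H →* Abelianization H := Abelianization.map φ with hφab
      have hofs : Function.Surjective (Abelianization.of (G := H)) :=
        fun z => Quotient.inductionOn' z fun a => ⟨a, rfl⟩
      have hab_of : ∀ z : H, φab (Abelianization.of z) = Abelianization.of (φ z) := fun z => rfl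
      have hφabIter : ∀ (m : ℕ) (z : H),
          φab^[m] (Abelianization.of z) = Abelianization.of (φ^[m] z) := by
        intro m
        induction m with
        | zero => intro z; rfl
        | succ m ih =>
          intro z
          rw [Function.iterate_succ', Function.iterate_succ', Function.comp_apply,
            Function.comp_apply, ih, hab_of]
      have hψabIter : ∀ (m : ℕ) (z : H),
          (fun w : Abelianization H => w⁻¹ * φab w)^[m] (Abelianization.of z)
            = Abelianization.of ((fun w : H => w⁻¹ * φ w)^[m] z) := by
        intro m
        induction m with
        | zero => intro z; rfl
        | succ m ih =>
          intro z
          rw [Function.iterate_succ', Function.iterate_succ', Function.comp_apply,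
            Function.comp_apply, ih]
          show _ = Abelianization.of _
          rw [map_mul, map_inv, hab_of]
      have habelian := keyAbelian φab (q ^ k) N
        (by intro z; obtain ⟨w, rfl⟩ := hofs z; rw [hφabIter, hM])
        (by intro z; obtain ⟨w, rfl⟩ := hofs z; rw [hψabIter, hN]; exact map_one _)
      -- ψ y ∈ D
      have hcD : y⁻¹ * φ y ∈ D := by
        have h1 := habelian (Abelianization.of y)
        rw [← pow_mul] at h1
        have h2 : ((Abelianization.of y)⁻¹ * φab (Abelianization.of y)) = 1 :=
          coprime_kill hp hq hpq (IsPGroup.to_quotient hP (commutator H)) h1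
        rw [hab_of, ← map_inv, ← map_mul] at h2
        exact (QuotientGroup.eq_one_iff _).mp h2
      set c : H := y⁻¹ * φ y with hc
      have hφc : φ c = c := congrArg Subtype.val (hfixD ⟨c, hcD⟩)
      have hiter : ∀ j : ℕ, φ^[j] y = y * c ^ j := by
        intro j
        induction j with
        | zero => simp
        | succ j ih =>
          rw [Function.iterate_succ', Function.comp_apply, ih, map_mul, map_pow, hφc]
          have : φ y = y * c := by rw [hc, ← mul_assoc, mul_inv_cancel, one_mul]
          rw [this, mul_assoc, ← pow_succ']
      have hcM : c ^ (q ^ k) = 1 := by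
        have := hiter (q ^ k)
        rw [hM] at this
        exact (mul_eq_left.mp this.symm)
      have hc1 : c = 1 := coprime_kill hp hq hpq hP hcM
      rw [hc, inv_mul_eq_one] at hc1
      exact hc1.symm

theorem stmt19 {G : Type*} [Group G] (p q : ℕ) (hp : p.Prime) (hq : q.Prime) (hpq : p ≠ q)
    (P : Subgroup G) (hfin : Finite P) (hP : IsPGroup p P)
    (x : G) (k : ℕ) (hx : orderOf x = q ^ k)
    (hnorm : ∀ g ∈ P, x⁻¹ * g * x ∈ P)
    (hnontriv : ∃ g ∈ P, x⁻¹ * g * x ≠ g) :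
    ∃ y ∈ P, ∀ n, 1 ≤ n → engel y x n ≠ 1 := by
  classical
  by_contra hcon
  push_neg at hcon
  set φP : P →* P :=
    { toFun := fun g => ⟨x⁻¹ * (g : G) * x, hnorm g g.2⟩
      map_one' := by ext; simp
      map_mul' := by intro a b; ext; simp; group } with hφP
  set ψ : P → P := fun z => z⁻¹ * φP z with hψ
  have hψval : ∀ z : P, ((ψ z : P) : G) = (z : G)⁻¹ * (x⁻¹ * (z : G) * x) := by
    intro z; simp [hψ, hφP, mul_assoc]
  have hengel : ∀ (y : P) (n : ℕ), engel (y : G) x n = ((ψ^[n] y : P) : G) := by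
    intro y n
    induction n with
    | zero => rfl
    | succ n ih =>
      rw [Function.iterate_succ', Function.comp_apply, hψval]
      show cm (engel (y : G) x n) x = _
      rw [ih, cm]
      group
  have hψ1 : ∀ y : P, ∃ n : ℕ, ψ^[n] y = 1 := by
    intro y
    obtain ⟨n, _, hn⟩ := hcon y y.2
    exact ⟨n, Subtype.ext (by rw [← hengel]; simpa using hn)⟩
  haveI : Fintype P := Fintype.ofFinite _
  set f : P → ℕ := fun y => Nat.find (hψ1 y) with hf
  set N : ℕ := Finset.univ.sup f with hNdef
  have hψone : ψ 1 = 1 := by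
    apply Subtype.ext
    rw [hψval]
    simp
  have hN : ∀ y : P, ψ^[N] y = 1 := by
    intro y
    have hle : f y ≤ N := Finset.le_sup (Finset.mem_univ y)
    have hspec : ψ^[f y] y = 1 := Nat.find_spec (hψ1 y)
    calc ψ^[N] y = ψ^[N - f y] (ψ^[f y] y) := by
          rw [← Function.iterate_add_apply, Nat.sub_add_cancel hle]
      _ = 1 := by rw [hspec]; exact Function.iterate_fixed hψone _
  have hφval : ∀ (n : ℕ) (y : P), ((φP^[n] y : P) : G) = x⁻¹ ^ n * (y : G) * x ^ n := by
    intro n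
    induction n with
    | zero => intro y; simp
    | succ n ih =>
      intro y
      rw [Function.iterate_succ', Function.comp_apply]
      show x⁻¹ * _ * x = _
      rw [ih, pow_succ, pow_succ]
      group
  have hxq : x ^ (q ^ k) = 1 := by rw [← hx]; exact pow_orderOf_eq_one x
  have hφM : ∀ y : P, φP^[q ^ k] y = y := by
    intro y
    apply Subtype.ext
    rw [hφval, inv_pow, hxq]
    simp
  have hfix := key_s19 (Nat.card P) rfl p q k hp hq hpq hP φP hφM N hN
  obtain ⟨g, hg, hne⟩ := hnontriv
  have := congrArg Subtype.val (hfix ⟨g, hg⟩)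
  exact hne this
end
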